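/- Let θ⁰, θ₂^∞, θ₃^∞ ∈ ℂ with 2θ⁰+θ₂^∞+θ₃^∞ = 0. Let I ⊆ ℝ be an open interval and q₁,q₂,p₁,p₂,u : I → ℂ differentiable with u(t) ≠ 0. Define Q(t) = [[q₁, u],[−q₂/u, q₁]], P(t) = [[p₁/2, −p₂u],[(p₂q₂−θ⁰−θ₂^∞)/u, p₁/2]]. Define H(t; q₁,p₁,q₂,p₂) := tr[P² − (Q²+t)P + θ⁰Q]. Then: (a) this trace is independent of u and is a polynomial in (q₁,p₁,q₂,p₂); (b) the matrix equations Q′ = 2P − Q² − t and P′ = PQ + QP − θ⁰ hold on I if and only if dqᵢ/dt = ∂H/∂pᵢ and dpᵢ/dt = −∂H/∂qᵢ for i = 1,2 and (1/u)du/dt = −2(q₁ + p₂) hold on I. -/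

import Mathlib

/-!
The matrix Painlevé II system `Q′ = 2P − Q² − t`, `P′ = PQ + QP − θ⁰` is equivalent to
the Hamiltonian system for `H^Mat_II = tr[P² − (Q²+t)P + θ⁰Q]` together with the gauge
equation `(1/u)du/dt = −2(q₁+p₂)`; moreover the trace is independent of `u` and is a
polynomial in `(q₁,p₁,q₂,p₂)`.
-/

open Matrix

noncomputable section

/-- Entrywise derivative of a matrix-valued function of a real variable. -/
def matDeriv {m n : Type*} (F : ℝ → Matrix m n ℂ) (t : ℝ) : Matrix m n ℂ :=
  Matrix.of fun i j => deriv (fun s => F s i j) t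

/-- `Q = [[q₁, u],[−q₂/u, q₁]]` with `(a,c,v) = (q₁,q₂,u)`. -/
def Qm (a c v : ℂ) : Matrix (Fin 2) (Fin 2) ℂ := !![a, v; -c/v, a]

/-- `P = [[p₁/2, −p₂u],[(p₂q₂−θ)/u, p₁/2]]` with `(b,d,c,v) = (p₁,p₂,q₂,u)`. -/
def Pm (b d c θ v : ℂ) : Matrix (Fin 2) (Fin 2) ℂ := !![b/2, -d*v; (d*c - θ)/v, b/2]

/-- The trace `tr[P² − (Q²+t)P + θ⁰Q]` in coordinates `(a,b,c,d,v) = (q₁,p₁,q₂,p₂,u)`. -/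
def trII (θ0 θi2 t a b c d v : ℂ) : ℂ :=
  (Pm b d c (θ0 + θi2) v * Pm b d c (θ0 + θi2) v
    - (Qm a c v * Qm a c v + t • (1 : Matrix (Fin 2) (Fin 2) ℂ)) * Pm b d c (θ0 + θi2) v
    + θ0 • Qm a c v).trace

/-- The Hamiltonian `H^Mat_II(t; q₁,p₁,q₂,p₂)` (the trace evaluated at `u = 1`). -/
def HII (θ0 θi2 t a b c d : ℂ) : ℂ := trII θ0 θi2 t a b c d 1

/-- Explicit polynomial formula for the trace, independent of `v ≠ 0`. -/
lemma trII_eq (θ0 θi2 t a b c d v : ℂ) (hv : v ≠ 0) :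
    trII θ0 θi2 t a b c d v = b^2/2 - 2*c*d^2 + 2*d*(θ0+θi2) - a^2*b + b*c - b*t
      - 4*a*c*d + (2*(θ0+θi2) + 2*θ0)*a := by
  have h7 : v ^ 7 * v⁻¹ ^ 7 = 1 := by rw [← mul_pow, mul_inv_cancel₀ hv, one_pow]
  simp only [trII, Qm, Pm, Matrix.trace_fin_two, Matrix.add_apply, Matrix.sub_apply,
    Matrix.smul_apply, Matrix.mul_apply, Fin.sum_univ_two, Matrix.one_apply,
    Matrix.cons_val', Matrix.cons_val_zero, Matrix.cons_val_one, Matrix.head_cons,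
    Matrix.head_fin_const, Matrix.empty_val', Matrix.cons_val_fin_one, smul_eq_mul, Matrix.of_apply, if_true, zero_ne_one, one_ne_zero, if_false]
  field_simp
  ring

lemma HII_eq (θ0 θi2 t a b c d : ℂ) :
    HII θ0 θi2 t a b c d = b^2/2 - 2*c*d^2 + 2*d*(θ0+θi2) - a^2*b + b*c - b*t
      - 4*a*c*d + (2*(θ0+θi2) + 2*θ0)*a :=
  trII_eq θ0 θi2 t a b c d 1 one_ne_zero

lemma deriv_quadratic (p q r x : ℂ) : deriv (fun y : ℂ => p*y^2 + q*y + r) x = 2*p*x + q := by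
  have h : HasDerivAt (fun y : ℂ => p*y^2 + q*y + r) (2*p*x + q) x := by
    have := (((hasDerivAt_pow 2 x).const_mul p).add ((hasDerivAt_id x).const_mul q)).add_const r
    refine this.congr_deriv ?_
    simp; ring
  exact h.deriv

lemma dH_db (θ0 θi2 t a b c d : ℂ) :
    deriv (fun x => HII θ0 θi2 t a x c d) b = b + c - a^2 - t := by
  have hfun : (fun x => HII θ0 θi2 t a x c d)
      = fun y : ℂ => (1/2)*y^2 + (c - a^2 - t)*y
        + (-2*c*d^2 + 2*d*(θ0+θi2) - 4*a*c*d + (2*(θ0+θi2) + 2*θ0)*a) :=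
    funext fun y => by rw [HII_eq]; ring
  rw [hfun, deriv_quadratic]; ring

lemma dH_da (θ0 θi2 t a b c d : ℂ) :
    deriv (fun x => HII θ0 θi2 t x b c d) a
      = -2*a*b - 4*c*d + 2*(θ0+θi2) + 2*θ0 := by
  have hfun : (fun x => HII θ0 θi2 t x b c d)
      = fun y : ℂ => (-b)*y^2 + (-4*c*d + 2*(θ0+θi2) + 2*θ0)*y
        + (b^2/2 - 2*c*d^2 + 2*d*(θ0+θi2) + b*c - b*t) :=
    funext fun y => by rw [HII_eq]; ring
  rw [hfun, deriv_quadratic]; ring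

lemma dH_dd (θ0 θi2 t a b c d : ℂ) :
    deriv (fun x => HII θ0 θi2 t a b c x) d
      = -4*c*d + 2*(θ0+θi2) - 4*a*c := by
  have hfun : (fun x => HII θ0 θi2 t a b c x)
      = fun y : ℂ => (-2*c)*y^2 + (2*(θ0+θi2) - 4*a*c)*y
        + (b^2/2 - a^2*b + b*c - b*t + (2*(θ0+θi2) + 2*θ0)*a) :=
    funext fun y => by rw [HII_eq]; ring
  rw [hfun, deriv_quadratic]; ring

lemma dH_dc (θ0 θi2 t a b c d : ℂ) :
    deriv (fun x => HII θ0 θi2 t a b x d) c = b - 2*d^2 - 4*a*d := by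
  have hfun : (fun x => HII θ0 θi2 t a b x d)
      = fun y : ℂ => (0:ℂ)*y^2 + (b - 2*d^2 - 4*a*d)*y
        + (b^2/2 + 2*d*(θ0+θi2) - a^2*b - b*t + (2*(θ0+θi2) + 2*θ0)*a) :=
    funext fun y => by rw [HII_eq]; ring
  rw [hfun, deriv_quadratic]; ring

/-- The trace as an explicit multivariate polynomial in `(a,b,c,d)`. -/
def polyF (θ0 θi2 t : ℂ) : MvPolynomial (Fin 4) ℂ :=
  MvPolynomial.C (1/2) * MvPolynomial.X 1 ^ 2
    - MvPolynomial.C 2 * MvPolynomial.X 2 * MvPolynomial.X 3 ^ 2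
    + MvPolynomial.C (2*(θ0+θi2)) * MvPolynomial.X 3
    - MvPolynomial.X 0 ^ 2 * MvPolynomial.X 1
    + MvPolynomial.X 1 * MvPolynomial.X 2
    - MvPolynomial.C t * MvPolynomial.X 1
    - MvPolynomial.C 4 * MvPolynomial.X 0 * MvPolynomial.X 2 * MvPolynomial.X 3
    + MvPolynomial.C (2*(θ0+θi2) + 2*θ0) * MvPolynomial.X 0

lemma polyF_eval (θ0 θi2 t a b c d : ℂ) :
    MvPolynomial.eval ![a, b, c, d] (polyF θ0 θi2 t)
      = b^2/2 - 2*c*d^2 + 2*d*(θ0+θi2) - a^2*b + b*c - b*t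
        - 4*a*c*d + (2*(θ0+θi2) + 2*θ0)*a := by
  simp [polyF]
  ring


section entryLemmas
variable (θ0 θi2 τ a b c d v : ℂ)

lemma rQ00' (hv : v ≠ 0) : ((2:ℂ) • Pm b d c (θ0+θi2) v - Qm a c v * Qm a c v
    - τ • (1 : Matrix (Fin 2) (Fin 2) ℂ)) 0 0 = b + c - a^2 - τ := by
  simp [Qm, Pm, Matrix.mul_apply, Fin.sum_univ_two]
  field_simp
  ring

lemma rQ11' (hv : v ≠ 0) : ((2:ℂ) • Pm b d c (θ0+θi2) v - Qm a c v * Qm a c v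
    - τ • (1 : Matrix (Fin 2) (Fin 2) ℂ)) 1 1 = b + c - a^2 - τ := by
  simp [Qm, Pm, Matrix.mul_apply, Fin.sum_univ_two]
  field_simp
  ring

lemma rQ01' : ((2:ℂ) • Pm b d c (θ0+θi2) v - Qm a c v * Qm a c v
    - τ • (1 : Matrix (Fin 2) (Fin 2) ℂ)) 0 1 = -2*d*v - 2*a*v := by
  simp [Qm, Pm, Matrix.mul_apply, Fin.sum_univ_two]
  ring

lemma rQ10' (hv : v ≠ 0) : ((2:ℂ) • Pm b d c (θ0+θi2) v - Qm a c v * Qm a c v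
    - τ • (1 : Matrix (Fin 2) (Fin 2) ℂ)) 1 0 = (2*(d*c - (θ0+θi2)) + 2*a*c)/v := by
  simp [Qm, Pm, Matrix.mul_apply, Fin.sum_univ_two]
  field_simp
  ring

lemma rP00' (hv : v ≠ 0) : (Pm b d c (θ0+θi2) v * Qm a c v + Qm a c v * Pm b d c (θ0+θi2) v
    - θ0 • (1 : Matrix (Fin 2) (Fin 2) ℂ)) 0 0 = a*b + 2*d*c - (θ0+θi2) - θ0 := by
  simp [Qm, Pm, Matrix.mul_apply, Fin.sum_univ_two]
  field_simp
  ring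

lemma rP11' (hv : v ≠ 0) : (Pm b d c (θ0+θi2) v * Qm a c v + Qm a c v * Pm b d c (θ0+θi2) v
    - θ0 • (1 : Matrix (Fin 2) (Fin 2) ℂ)) 1 1 = a*b + 2*d*c - (θ0+θi2) - θ0 := by
  simp [Qm, Pm, Matrix.mul_apply, Fin.sum_univ_two]
  field_simp
  ring

lemma rP01' : (Pm b d c (θ0+θi2) v * Qm a c v + Qm a c v * Pm b d c (θ0+θi2) v
    - θ0 • (1 : Matrix (Fin 2) (Fin 2) ℂ)) 0 1 = b*v - 2*a*d*v := by
  simp [Qm, Pm, Matrix.mul_apply, Fin.sum_univ_two]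
  field_simp
  ring

lemma rP10' (hv : v ≠ 0) : (Pm b d c (θ0+θi2) v * Qm a c v + Qm a c v * Pm b d c (θ0+θi2) v
    - θ0 • (1 : Matrix (Fin 2) (Fin 2) ℂ)) 1 0 = (2*a*(d*c-(θ0+θi2)) - b*c)/v := by
  simp [Qm, Pm, Matrix.mul_apply, Fin.sum_univ_two]
  field_simp
  ring

end entryLemmas

lemma mat2_eq_iff (A B : Matrix (Fin 2) (Fin 2) ℂ) :
    A = B ↔ (A 0 0 = B 0 0 ∧ A 0 1 = B 0 1 ∧ A 1 0 = B 1 0 ∧ A 1 1 = B 1 1) := by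
  constructor
  · intro h; subst h; exact ⟨rfl, rfl, rfl, rfl⟩
  · rintro ⟨h00, h01, h10, h11⟩
    ext i j
    fin_cases i <;> fin_cases j <;> assumption

lemma scalar_iff (θ0 θi2 τ a b c d v a' b' c' d' v' : ℂ) (hv : v ≠ 0) :
  ((a' = b + c - a^2 - τ ∧
    v' = -2*d*v - 2*a*v ∧
    (-c'*v + c*v')/v^2 = (2*(d*c - (θ0+θi2)) + 2*a*c)/v ∧
    a' = b + c - a^2 - τ) ∧
   (b'/2 = a*b + 2*d*c - (θ0+θi2) - θ0 ∧
    -(d'*v + d*v') = b*v - 2*a*d*v ∧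
    ((d'*c + d*c')*v - (d*c - (θ0+θi2))*v')/v^2 = (2*a*(d*c-(θ0+θi2)) - b*c)/v ∧
    b'/2 = a*b + 2*d*c - (θ0+θi2) - θ0))
  ↔ (a' = b + c - a^2 - τ ∧
     b' = -(-2*a*b - 4*c*d + 2*(θ0+θi2) + 2*θ0) ∧
     c' = -4*c*d + 2*(θ0+θi2) - 4*a*c ∧
     d' = -(b - 2*d^2 - 4*a*d) ∧
     v⁻¹*v' = -2*(a+d)) := by
  constructor
  · rintro ⟨⟨h1, h2, h3, -⟩, ⟨h4, h5, -, -⟩⟩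
    field_simp at h3
    refine ⟨h1, by linear_combination 2*h4, ?_, ?_, ?_⟩
    · refine mul_right_cancel₀ (pow_ne_zero 2 hv) ?_
      linear_combination -v*h3 + c*v*h2
    · refine mul_right_cancel₀ hv ?_
      linear_combination -h5 - d*h2
    · rw [h2]; field_simp; ring
  · rintro ⟨h1, h2, h3, h4, h5⟩
    have hv' : v' = -2*(a+d)*v := by
      field_simp at h5; linear_combination h5
    refine ⟨⟨h1, by linear_combination hv', ?_, h1⟩,
      ⟨by linear_combination h2/2, ?_, ?_, by linear_combination h2/2⟩⟩
    · field_simp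
      linear_combination (-v)*h3 + c*hv'
    · linear_combination (-v)*h4 - d*hv'
    · field_simp
      linear_combination (c*v)*h4 + (d*v)*h3 - (d*c-(θ0+θi2))*hv'

theorem matrix_PII_Hamiltonian_form
    (θ0 θi2 θi3 : ℂ) (hFuchs : 2*θ0 + θi2 + θi3 = 0)
    (α β : ℝ)
    (q1 q2 p1 p2 u : ℝ → ℂ)
    (hdiff : ∀ t ∈ Set.Ioo α β, DifferentiableAt ℝ q1 t ∧ DifferentiableAt ℝ q2 t ∧
      DifferentiableAt ℝ p1 t ∧ DifferentiableAt ℝ p2 t ∧ DifferentiableAt ℝ u t)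
    (hu : ∀ t ∈ Set.Ioo α β, u t ≠ 0)
    (Q P : ℝ → Matrix (Fin 2) (Fin 2) ℂ)
    (hQ : ∀ t : ℝ, Q t = Qm (q1 t) (q2 t) (u t))
    (hP : ∀ t : ℝ, P t = Pm (p1 t) (p2 t) (q2 t) (θ0 + θi2) (u t)) :
    -- (a) the trace is independent of u and polynomial in (q₁,p₁,q₂,p₂)
    ((∀ t a b c d v w : ℂ, v ≠ 0 → w ≠ 0 →
        trII θ0 θi2 t a b c d v = trII θ0 θi2 t a b c d w) ∧
      (∀ t : ℂ, ∃ F : MvPolynomial (Fin 4) ℂ, ∀ a b c d v : ℂ, v ≠ 0 →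
        trII θ0 θi2 t a b c d v = MvPolynomial.eval ![a, b, c, d] F)) ∧
    -- (b) matrix ODEs ↔ Hamiltonian system + gauge equation
    (((∀ t ∈ Set.Ioo α β,
          matDeriv Q t = (2:ℂ) • P t - Q t * Q t - (t : ℂ) • (1 : Matrix (Fin 2) (Fin 2) ℂ)) ∧
        (∀ t ∈ Set.Ioo α β,
          matDeriv P t = P t * Q t + Q t * P t - θ0 • (1 : Matrix (Fin 2) (Fin 2) ℂ)))
      ↔
      (∀ t ∈ Set.Ioo α β,
        deriv q1 t = deriv (fun x => HII θ0 θi2 (t:ℂ) (q1 t) x (q2 t) (p2 t)) (p1 t) ∧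
        deriv p1 t = -(deriv (fun x => HII θ0 θi2 (t:ℂ) x (p1 t) (q2 t) (p2 t)) (q1 t)) ∧
        deriv q2 t = deriv (fun x => HII θ0 θi2 (t:ℂ) (q1 t) (p1 t) (q2 t) x) (p2 t) ∧
        deriv p2 t = -(deriv (fun x => HII θ0 θi2 (t:ℂ) (q1 t) (p1 t) x (p2 t)) (q2 t)) ∧
        (u t)⁻¹ * deriv u t = -2 * (q1 t + p2 t))) := by
  constructor
  · constructor
    · intro t a b c d v w hv hw
      rw [trII_eq θ0 θi2 t a b c d v hv, trII_eq θ0 θi2 t a b c d w hw]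
    · intro t
      refine ⟨polyF θ0 θi2 t, fun a b c d v hv => ?_⟩
      rw [trII_eq θ0 θi2 t a b c d v hv, polyF_eval]
  · have main : ∀ t ∈ Set.Ioo α β,
        ((matDeriv Q t = (2:ℂ) • P t - Q t * Q t - (t : ℂ) • (1 : Matrix (Fin 2) (Fin 2) ℂ)) ∧
         (matDeriv P t = P t * Q t + Q t * P t - θ0 • (1 : Matrix (Fin 2) (Fin 2) ℂ)))
        ↔
        (deriv q1 t = deriv (fun x => HII θ0 θi2 (t:ℂ) (q1 t) x (q2 t) (p2 t)) (p1 t) ∧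
        deriv p1 t = -(deriv (fun x => HII θ0 θi2 (t:ℂ) x (p1 t) (q2 t) (p2 t)) (q1 t)) ∧
        deriv q2 t = deriv (fun x => HII θ0 θi2 (t:ℂ) (q1 t) (p1 t) (q2 t) x) (p2 t) ∧
        deriv p2 t = -(deriv (fun x => HII θ0 θi2 (t:ℂ) (q1 t) (p1 t) x (p2 t)) (q2 t)) ∧
        (u t)⁻¹ * deriv u t = -2 * (q1 t + p2 t)) := by
      intro t ht
      obtain ⟨ha, hc, hb, hd, hv⟩ := hdiff t ht
      have hvne := hu t ht
      -- entries of matDeriv Q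
      have dQ00 : matDeriv Q t 0 0 = deriv q1 t := by
        show deriv (fun s => Q s 0 0) t = _
        have hfun : (fun s => Q s 0 0) = q1 := funext fun s => by simp [hQ s, Qm]
        rw [hfun]
      have dQ01 : matDeriv Q t 0 1 = deriv u t := by
        show deriv (fun s => Q s 0 1) t = _
        have hfun : (fun s => Q s 0 1) = u := funext fun s => by simp [hQ s, Qm]
        rw [hfun]
      have dQ11 : matDeriv Q t 1 1 = deriv q1 t := by
        show deriv (fun s => Q s 1 1) t = _
        have hfun : (fun s => Q s 1 1) = q1 := funext fun s => by simp [hQ s, Qm]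
        rw [hfun]
      have dQ10 : matDeriv Q t 1 0
          = (-deriv q2 t * u t + q2 t * deriv u t) / (u t)^2 := by
        show deriv (fun s => Q s 1 0) t = _
        have hfun : (fun s => Q s 1 0) = fun s => (-q2 s) / u s :=
          funext fun s => by simp [hQ s, Qm, neg_div]
        rw [hfun]; refine (hc.hasDerivAt.neg.div hv.hasDerivAt hvne).deriv.trans ?_
        simp only [Pi.neg_apply]; ring
      -- entries of matDeriv P
      have dP00 : matDeriv P t 0 0 = deriv p1 t / 2 := by
        show deriv (fun s => P s 0 0) t = _
        have hfun : (fun s => P s 0 0) = fun s => p1 s / 2 :=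
          funext fun s => by simp [hP s, Pm]
        rw [hfun, deriv_div_const, hb.hasDerivAt.deriv]
      have dP11 : matDeriv P t 1 1 = deriv p1 t / 2 := by
        show deriv (fun s => P s 1 1) t = _
        have hfun : (fun s => P s 1 1) = fun s => p1 s / 2 :=
          funext fun s => by simp [hP s, Pm]
        rw [hfun, deriv_div_const, hb.hasDerivAt.deriv]
      have dP01 : matDeriv P t 0 1
          = -(deriv p2 t * u t + p2 t * deriv u t) := by
        show deriv (fun s => P s 0 1) t = _
        have hfun : (fun s => P s 0 1) = fun s => -(p2 s * u s) :=
          funext fun s => by simp [hP s, Pm]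
        rw [hfun]; exact ((hd.hasDerivAt.mul hv.hasDerivAt).neg).deriv
      have dP10 : matDeriv P t 1 0
          = ((deriv p2 t * q2 t + p2 t * deriv q2 t) * u t
              - (p2 t * q2 t - (θ0+θi2)) * deriv u t) / (u t)^2 := by
        show deriv (fun s => P s 1 0) t = _
        have hfun : (fun s => P s 1 0) = fun s => (p2 s * q2 s - (θ0+θi2)) / u s :=
          funext fun s => by simp [hP s, Pm]
        rw [hfun]; exact (((hd.hasDerivAt.mul hc.hasDerivAt).sub_const _).div hv.hasDerivAt hvne).deriv
      rw [mat2_eq_iff, mat2_eq_iff, dQ00, dQ01, dQ10, dQ11, dP00, dP01, dP10, dP11,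
        hQ t, hP t,
        rQ00' θ0 θi2 (t:ℂ) (q1 t) (p1 t) (q2 t) (p2 t) (u t) hvne,
        rQ01' θ0 θi2 (t:ℂ) (q1 t) (p1 t) (q2 t) (p2 t) (u t),
        rQ10' θ0 θi2 (t:ℂ) (q1 t) (p1 t) (q2 t) (p2 t) (u t) hvne,
        rQ11' θ0 θi2 (t:ℂ) (q1 t) (p1 t) (q2 t) (p2 t) (u t) hvne,
        rP00' θ0 θi2 (q1 t) (p1 t) (q2 t) (p2 t) (u t) hvne,
        rP01' θ0 θi2 (q1 t) (p1 t) (q2 t) (p2 t) (u t),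
        rP10' θ0 θi2 (q1 t) (p1 t) (q2 t) (p2 t) (u t) hvne,
        rP11' θ0 θi2 (q1 t) (p1 t) (q2 t) (p2 t) (u t) hvne,
        dH_db, dH_da, dH_dd, dH_dc]
      exact scalar_iff θ0 θi2 (t:ℂ) (q1 t) (p1 t) (q2 t) (p2 t) (u t)
        (deriv q1 t) (deriv p1 t) (deriv q2 t) (deriv p2 t) (deriv u t) hvne
    constructor
    · rintro ⟨h1, h2⟩ t ht
      exact (main t ht).mp ⟨h1 t ht, h2 t ht⟩
    · intro h
      exact ⟨fun t ht => ((main t ht).mpr (h t ht)).1,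
        fun t ht => ((main t ht).mpr (h t ht)).2⟩

end
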